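/- Let Φ, Ψ be two d×K real matrices with unit-norm columns φ_i, ψ_i, let c ∈ ℝ^K be nonnegative nonincreasing with ‖c‖₂ = 1, let p be uniformly random over all permutations of {1,…,K}, σ uniformly random over {−1,1}^K independent of p, and i_p = p⁻¹(1). Then E_p E_σ |⟨ψ_{i_p}, Φ c_{p,σ}⟩|² = (c₁²/K) Σ_i |⟨ψ_i, φ_i⟩|² + ((1−c₁²)/(K(K−1))) (‖Φ*Ψ‖_F² − Σ_i |⟨ψ_i, φ_i⟩|²). -/

import Mathlib

/-!
Expanding the square, the sign average kills every cross term, since flipping one sign negates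
it; what remains is `∑ᵢ c_i² ⟪ψ_{q a}, φ_{q i}⟫²` with `q = p⁻¹`. Averaging over `q`, the
diagonal term `i = a` sees the uniformly distributed index `q a`, so it contributes the mean of
the diagonal of the Gram matrix; each `i ≠ a` sees the uniformly distributed ordered pair
`(q a, q i)` of distinct indices, so it contributes the mean of its off-diagonal entries.
-/

open scoped RealInnerProductSpace

open Finset

section Signs

variable {ι R : Type*} [Fintype ι] [DecidableEq ι] [CommRing R]

theorem sum_sign_mul_sign (j k : ι) :
    ∑ σ : ι → Bool, (if σ j then (1 : R) else -1) * (if σ k then 1 else -1)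
      = if j = k then 2 ^ Fintype.card ι else 0 := by
  split_ifs with hjk
  · subst hjk
    have hsq (b : Bool) : (if b then (1 : R) else -1) * (if b then 1 else -1) = 1 := by
      cases b <;> simp
    simp only [hsq, sum_const, card_univ, Fintype.card_fun, Fintype.card_bool, nsmul_one,
      Nat.cast_pow, Nat.cast_ofNat]
  · refine sum_ninvolution (fun σ : ι → Bool => Function.update σ j (!σ j)) (fun σ => ?_)
      (fun σ _ h => ?_) (fun σ => mem_univ _) (fun σ => ?_)
    · rw [Function.update_self, Function.update_of_ne (Ne.symm hjk)]
      cases σ j <;> cases σ k <;> simp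
    · simpa using congrFun h j
    · simp

theorem sum_sq_sum_sign_mul (f : ι → R) :
    ∑ σ : ι → Bool, (∑ j, (if σ j then (1 : R) else -1) * f j) ^ 2
      = 2 ^ Fintype.card ι * ∑ j, f j ^ 2 := by
  calc ∑ σ : ι → Bool, (∑ j, (if σ j then (1 : R) else -1) * f j) ^ 2
      = ∑ j, ∑ k, (∑ σ : ι → Bool, (if σ j then (1 : R) else -1) * (if σ k then 1 else -1))
          * (f j * f k) := by
        simp_rw [sq, sum_mul_sum, sum_mul]
        rw [sum_comm]
        refine sum_congr rfl fun j _ => ?_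
        rw [sum_comm]
        exact sum_congr rfl fun k _ => sum_congr rfl fun σ _ => by ring
    _ = 2 ^ Fintype.card ι * ∑ j, f j ^ 2 := by
        simp_rw [sum_sign_mul_sign, ite_mul, zero_mul, sum_ite_eq, mem_univ, if_true, mul_sum, sq]

end Signs

theorem sum_inner_sum_sign_smul_sq {ι E : Type*} [Fintype ι] [DecidableEq ι]
    [NormedAddCommGroup E] [InnerProductSpace ℝ E] (v : E) (φ : ι → E) (a : ι → ℝ) :
    ∑ σ : ι → Bool, ⟪v, ∑ j, ((if σ j then (1 : ℝ) else -1) * a j) • φ j⟫ ^ 2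
      = 2 ^ Fintype.card ι * ∑ j, a j ^ 2 * ⟪v, φ j⟫ ^ 2 := by
  simp_rw [inner_sum, real_inner_smul_right, mul_assoc, sum_sq_sum_sign_mul, mul_pow]

section Permutations

variable {α M : Type*} [Fintype α] [DecidableEq α]

theorem sum_perm_apply_eq [AddCommMonoid M] (g : α → M) (a b : α) :
    ∑ q : Equiv.Perm α, g (q a) = ∑ q : Equiv.Perm α, g (q b) :=
  Fintype.sum_equiv (Equiv.mulRight (Equiv.swap a b)) _ _ fun q => by simp

theorem card_nsmul_sum_perm_apply [AddCommMonoid M] (g : α → M) (a : α) :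
    Fintype.card α • ∑ q : Equiv.Perm α, g (q a) = (Fintype.card α).factorial • ∑ b, g b :=
  calc Fintype.card α • ∑ q : Equiv.Perm α, g (q a)
      = ∑ b : α, ∑ q : Equiv.Perm α, g (q b) := by
        rw [← card_univ, ← sum_const]
        exact sum_congr rfl fun b _ => sum_perm_apply_eq g a b
    _ = ∑ q : Equiv.Perm α, ∑ b, g (q b) := sum_comm
    _ = (Fintype.card α).factorial • ∑ b, g b := by
        simp only [Equiv.sum_comp, sum_const, card_univ, Fintype.card_perm]

theorem sum_perm_apply_apply_eq [AddCommMonoid M] (h : α → α → M) {a j k : α}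
    (hj : j ≠ a) (hk : k ≠ a) :
    ∑ q : Equiv.Perm α, h (q a) (q j) = ∑ q : Equiv.Perm α, h (q a) (q k) :=
  Fintype.sum_equiv (Equiv.mulRight (Equiv.swap j k)) _ _ fun q => by
    simp [Equiv.swap_apply_of_ne_of_ne hj.symm hk.symm]

theorem card_mul_pred_nsmul_sum_perm_apply_apply [AddCommGroup M] (h : α → α → M) {a j : α}
    (hj : j ≠ a) :
    (Fintype.card α * (Fintype.card α - 1)) • ∑ q : Equiv.Perm α, h (q a) (q j)
      = (Fintype.card α).factorial • (∑ b, ∑ x, h b x - ∑ b, h b b) := by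
  have hoff : (Fintype.card α - 1) • ∑ q : Equiv.Perm α, h (q a) (q j)
      = ∑ q : Equiv.Perm α, (∑ x, h (q a) x - h (q a) (q a)) :=
    calc (Fintype.card α - 1) • ∑ q : Equiv.Perm α, h (q a) (q j)
        = ∑ k ∈ univ.erase a, ∑ q : Equiv.Perm α, h (q a) (q k) := by
          rw [← card_univ, ← card_erase_of_mem (mem_univ a), ← sum_const]
          exact sum_congr rfl fun k hk => sum_perm_apply_apply_eq h hj (ne_of_mem_erase hk)
      _ = ∑ q : Equiv.Perm α, ∑ k ∈ univ.erase a, h (q a) (q k) := sum_comm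
      _ = ∑ q : Equiv.Perm α, (∑ x, h (q a) x - h (q a) (q a)) := by
          refine sum_congr rfl fun q _ => ?_
          rw [sum_erase_eq_sub (mem_univ a), Equiv.sum_comp q (h (q a))]
  rw [mul_nsmul', hoff, card_nsmul_sum_perm_apply (fun b => ∑ x, h b x - h b b), sum_sub_distrib]

theorem sum_perm_sum_mul_apply_apply_div_factorial {𝕜 : Type*} [Field 𝕜] [CharZero 𝕜]
    (w : α → 𝕜) (h : α → α → 𝕜) (a : α) (hα : 2 ≤ Fintype.card α) :
    (∑ q : Equiv.Perm α, ∑ i, w i * h (q a) (q i)) / (Fintype.card α).factorial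
      = w a / Fintype.card α * ∑ b, h b b
        + (∑ i, w i - w a) / (Fintype.card α * (Fintype.card α - 1))
          * (∑ b, ∑ x, h b x - ∑ b, h b b) := by
  set n := Fintype.card α
  have hn : (n : 𝕜) ≠ 0 := Nat.cast_ne_zero.2 (by omega)
  have hn1 : (n : 𝕜) - 1 ≠ 0 := sub_ne_zero.2 (by exact_mod_cast (by omega : n ≠ 1))
  have hdiag : ∑ q : Equiv.Perm α, h (q a) (q a) = (n.factorial * ∑ b, h b b) / n := by
    rw [eq_div_iff hn, mul_comm, ← nsmul_eq_mul, card_nsmul_sum_perm_apply (fun b => h b b),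
      nsmul_eq_mul]
  have hoff : ∀ i ∈ univ.erase a, ∑ q : Equiv.Perm α, h (q a) (q i)
      = n.factorial * (∑ b, ∑ x, h b x - ∑ b, h b b) / (n * (n - 1)) := fun i hi => by
    rw [eq_div_iff (mul_ne_zero hn hn1), mul_comm, ← Nat.cast_pred (by omega), ← Nat.cast_mul,
      ← nsmul_eq_mul, card_mul_pred_nsmul_sum_perm_apply_apply h (ne_of_mem_erase hi),
      nsmul_eq_mul]
  rw [sum_comm, ← add_sum_erase _ _ (mem_univ a), ← sum_erase_eq_sub (mem_univ a)]
  simp_rw [← mul_sum]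
  rw [hdiag, sum_congr rfl fun i hi => congrArg (w i * ·) (hoff i hi), ← sum_mul]
  field_simp [n.factorial_ne_zero]

end Permutations

/-- expectation over permutations and signs of the squared inner product
with the column of `Ψ` indexed by `i_p = p⁻¹(1)`. -/
theorem expectation_max_response_general {d K : ℕ} (hK : 2 ≤ K)
    (φ ψ : Fin K → EuclideanSpace ℝ (Fin d))
    (c : Fin K → ℝ)
    (hc2 : ∑ i, (c i) ^ 2 = 1) :
    (∑ p : Equiv.Perm (Fin K), ∑ σ : Fin K → Bool,
        |(⟪ψ (p.symm ⟨0, by omega⟩),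
            ∑ j, ((if σ j then (1 : ℝ) else -1) * c (p j)) • φ j⟫)| ^ 2)
      / (K.factorial * 2 ^ K)
    = (c ⟨0, by omega⟩) ^ 2 / K * ∑ i, (⟪ψ i, φ i⟫ : ℝ) ^ 2
      + (1 - (c ⟨0, by omega⟩) ^ 2) / ((K : ℝ) * ((K : ℝ) - 1)) *
          ((∑ i, ∑ j, (⟪φ i, ψ j⟫ : ℝ) ^ 2) - ∑ i, (⟪ψ i, φ i⟫ : ℝ) ^ 2) := by
  set a : Fin K := ⟨0, by omega⟩
  have hsigns (p : Equiv.Perm (Fin K)) :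
      ∑ σ : Fin K → Bool, |⟪ψ (p.symm a), ∑ j, ((if σ j then (1 : ℝ) else -1) * c (p j)) • φ j⟫| ^ 2
        = 2 ^ K * ∑ j, c (p j) ^ 2 * ⟪ψ (p.symm a), φ j⟫ ^ 2 := by
    simp_rw [sq_abs]
    rw [sum_inner_sum_sign_smul_sq, Fintype.card_fin]
  have hinv : ∑ p : Equiv.Perm (Fin K), ∑ j, c (p j) ^ 2 * ⟪ψ (p.symm a), φ j⟫ ^ 2
      = ∑ q : Equiv.Perm (Fin K), ∑ i, c i ^ 2 * ⟪ψ (q a), φ (q i)⟫ ^ 2 :=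
    Fintype.sum_equiv (Equiv.inv _) _ _ fun p => by
      rw [← Equiv.sum_comp p.symm]
      simp
  have hfrob : ∑ i, ∑ j, ⟪φ i, ψ j⟫ ^ 2 = ∑ b, ∑ x, ⟪ψ b, φ x⟫ ^ 2 := by
    rw [sum_comm]
    simp_rw [real_inner_comm]
  have hexp := sum_perm_sum_mul_apply_apply_div_factorial (fun i => c i ^ 2)
    (fun b x => ⟪ψ b, φ x⟫ ^ 2) a (by simpa)
  rw [Fintype.card_fin, hc2] at hexp
  rw [sum_congr rfl fun p _ => hsigns p, ← mul_sum, hinv, mul_comm (K.factorial : ℝ), ← div_div,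
    mul_div_cancel_left₀ _ (by positivity), hexp, hfrob]
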